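/- For every real ν > 0 and every real u with 0 < u < 1/(1−q), the first q-Bessel function satisfies the recurrence u^{−(ν−1)} ( J^{(1)}_{ν+1}(u|q²) + J^{(1)}_{ν−1}(u|q²) ) = [2ν]_q · (qu)^{−ν} J^{(1)}_ν(qu|q²). -/

import Mathlib

open scoped BigOperators

noncomputable section

/-- The q-number `[u]_q = (q^u - 1)/(q - 1)`. -/
def qNum (q u : ℝ) : ℝ := (q ^ u - 1) / (q - 1)

/-- The q-factorial `[n]_q! = ∏_{i=1}^n [i]_q`. -/
def qFact (q : ℝ) (n : ℕ) : ℝ := ∏ i ∈ Finset.range n, qNum q ((i : ℝ) + 1)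

/-- The q-Gamma function `Γ_q(t) = (1-q)^{1-t} ∏_{k=0}^∞ (1-q^{k+1})/(1-q^{k+t})`. -/
def qGamma (q t : ℝ) : ℝ :=
  (1 - q) ^ (1 - t) * ∏' k : ℕ, (1 - q ^ (k + 1)) / (1 - q ^ ((k : ℝ) + t))

/-- The q-derivative `∂^q_t f(t) = (f(qt) - f(t))/((q-1)t)`.
The `q⁻¹`-derivative is `qDeriv q⁻¹`. -/
def qDeriv (q : ℝ) (f : ℝ → ℝ) (t : ℝ) : ℝ := (f (q * t) - f t) / ((q - 1) * t)

/-- The q-Pochhammer symbol `(a; q)_k = ∏_{l=0}^{k-1} (1 - a q^l)`. -/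
def qPoch (a q : ℝ) (k : ℕ) : ℝ := ∏ l ∈ Finset.range k, (1 - a * q ^ l)

/-- The q-exponential `E_q(t) = ∑_{j=0}^∞ q^{j(j-1)/2} t^j/[j]_q!`. -/
def qExpE (q t : ℝ) : ℝ := ∑' j : ℕ, q ^ (j * (j - 1) / 2) * t ^ j / qFact q j

/-- `e_q(-u) := 1/E_q(u)` (intended for `u ≥ 0`); `qExpe q u` denotes `e_q(-u)`. -/
def qExpe (q u : ℝ) : ℝ := (qExpE q u)⁻¹

/-- The first q-Bessel function `J^{(1)}_ν(x|q²)`. -/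
def qBessel1 (q ν x : ℝ) : ℝ :=
  (x / (1 + q)) ^ ν *
    ∑' i : ℕ, (-1 : ℝ) ^ i / (qFact (q ^ 2) i * qGamma (q ^ 2) ((i : ℝ) + ν + 1)) *
      (x / (1 + q)) ^ (2 * i)

/-- The second q-Bessel function `J^{(2)}_ν(x|q²)`. -/
def qBessel2 (q ν x : ℝ) : ℝ :=
  q ^ (ν ^ 2) * (x / (1 + q)) ^ ν *
    ∑' i : ℕ, q ^ (2 * (i : ℝ) * ((i : ℝ) + ν)) * (-1 : ℝ) ^ i /
        (qFact (q ^ 2) i * qGamma (q ^ 2) ((i : ℝ) + ν + 1)) *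
      (x / (1 + q)) ^ (2 * i)

/-- The q-Laguerre polynomial `𝓛^{(α)}_j(u|q²)`. -/
def qLaguerre (q α : ℝ) (j : ℕ) (u : ℝ) : ℝ :=
  ∑ i ∈ Finset.range (j + 1),
    q ^ ((j - i) * (j - i + 1)) * (-u) ^ i / (qFact (q ^ 2) (j - i) * qFact (q ^ 2) i) *
      (qPoch (q ^ (2 * (i : ℝ) + 2 * α + 2)) (q ^ 2) (j - i) / (1 - q ^ 2) ^ (j - i))

/-- The q-Laguerre polynomial `𝓛^{(α)}_j(u|q^{-2})`. -/
def qLaguerreInv (q α : ℝ) (j : ℕ) (u : ℝ) : ℝ :=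
  q ^ (-(j : ℝ) * ((j : ℝ) + 1 + 2 * α)) *
    ∑ i ∈ Finset.range (j + 1),
      q ^ (2 * (i : ℝ) * ((i : ℝ) + α)) * (-u) ^ i / (qFact (q ^ 2) (j - i) * qFact (q ^ 2) i) *
        (qPoch (q ^ (2 * (i : ℝ) + 2 * α + 2)) (q ^ 2) (j - i) / (1 - q ^ 2) ^ (j - i))

/-- The finite Jackson q-integral `∫_0^a f(t) d_q t = (1-q) a ∑_{k=0}^∞ f(q^k a) q^k`. -/
def jackson (q a : ℝ) (f : ℝ → ℝ) : ℝ := (1 - q) * a * ∑' k : ℕ, f (q ^ k * a) * q ^ k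

/-- The infinite Jackson q-integral `∫_0^{γ·∞} f(t) d_q t = (1-q) γ ∑_{k=-∞}^∞ f(q^k γ) q^k`. -/
def jacksonInf (q γ : ℝ) (f : ℝ → ℝ) : ℝ := (1 - q) * γ * ∑' k : ℤ, f (q ^ k * γ) * q ^ k

/-- The first q-Hankel transform `𝓗̄^{q,β}_ν`. -/
def hankel1 (q μ ν β : ℝ) (f : ℝ → ℝ) (t : ℝ) : ℝ :=
  (1 + q) / μ * jackson q (Real.sqrt (μ / ((1 - q ^ 2) * β)))
    (fun r => qBessel1 q ν ((1 + q) / μ * (r * t)) / (r * t) ^ ν * r ^ (2 * ν + 1) * f r)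

/-- The second q-Hankel transform `𝓗^{q,γ}_ν`. -/
def hankel2 (q μ ν γ : ℝ) (f : ℝ → ℝ) (r : ℝ) : ℝ :=
  (1 + q) / μ * jacksonInf q γ
    (fun t => qBessel2 q ν (q * ((1 + q) / μ) * (r * t)) / (r * t) ^ ν * t ^ (2 * ν + 1) * f t)

/-!
Write `J^{(1)}_μ(u|q²) = x^μ S_μ(x)` with `x = u/(1+q)` and `S_μ(x) = ∑ c_μ(i) x^{2i}`. Since
`[2ν]_q = (1+q)[ν]_{q²}` and the powers of `u`, `qu` and `1+q` cancel, the recurrence becomes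
`x² S_{ν+1}(x) + S_{ν-1}(x) = [ν]_{q²} S_ν(qx)`, which holds coefficientwise: for the constant
terms by `Γ_Q(ν+1) = [ν]_Q Γ_Q(ν)`, for the others by `[i+1+ν]_Q = [i+1]_Q + Q^{i+1}[ν]_Q`
(here `Q = q²`). The functional equation of `Γ_Q` follows from
`Γ_Q(t) = (1-Q)^{1-t} (Q;Q)_∞ / (Q^t;Q)_∞`, and the three series converge for `(1-q)u < 1` by the
ratio test, because `[n]_Q → 1/(1-Q)`.
-/

namespace QBessel

open Real Filter Topology

theorem rpow_neg_mul_div_rpow {u c : ℝ} (hu : 0 < u) (hc : 0 ≤ c) (a : ℝ) :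
    u ^ (-a) * (u / c) ^ a = c ^ (-a) := by
  have := (rpow_pos_of_pos hu a).ne'
  rw [div_rpow hu.le hc, rpow_neg hu.le, rpow_neg hc]
  field_simp

section QNumbers

variable {Q : ℝ}

theorem rpow_natCast_add (hQ : 0 < Q) (i : ℕ) (t : ℝ) : Q ^ ((i : ℝ) + t) = Q ^ t * Q ^ i := by
  rw [rpow_add hQ, rpow_natCast, mul_comm]

theorem one_sub_rpow_pos (hQ0 : 0 < Q) (hQ1 : Q < 1) {s : ℝ} (hs : 0 < s) : 0 < 1 - Q ^ s :=
  sub_pos.2 (rpow_lt_one hQ0.le hQ1 hs)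

theorem qNum_add (hQ : 0 < Q) (a b : ℝ) : qNum Q (a + b) = qNum Q a + Q ^ a * qNum Q b := by
  simp only [qNum, rpow_add hQ]
  ring

theorem qNum_pos (hQ0 : 0 < Q) (hQ1 : Q < 1) {s : ℝ} (hs : 0 < s) : 0 < qNum Q s :=
  div_pos_of_neg_of_neg (by linarith [rpow_lt_one hQ0.le hQ1 hs]) (by linarith)

theorem qNum_two_mul {q : ℝ} (hq0 : 0 ≤ q) (hq1 : q ≠ 1) (s : ℝ) :
    qNum q (2 * s) = (1 + q) * qNum (q ^ 2) s := by
  have hsq : (q ^ 2) ^ s = q ^ (2 * s) := by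
    rw [← rpow_natCast, ← rpow_mul hq0, Nat.cast_ofNat]
  have h1 : q - 1 ≠ 0 := sub_ne_zero.2 hq1
  have h2 : q ^ 2 - 1 ≠ 0 := by
    rw [show q ^ 2 - 1 = (q - 1) * (q + 1) by ring]
    exact mul_ne_zero h1 (by positivity)
  rw [qNum, qNum, hsq]
  field_simp
  ring

theorem tendsto_qNum_natCast_add (hQ0 : 0 < Q) (hQ1 : Q < 1) (a : ℝ) :
    Tendsto (fun i : ℕ => qNum Q (i + a)) atTop (𝓝 (1 - Q)⁻¹) := by
  have hpow : Tendsto (fun i : ℕ => Q ^ ((i : ℝ) + a)) atTop (𝓝 0) := by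
    simpa only [rpow_natCast_add hQ0, mul_zero] using
      (tendsto_pow_atTop_nhds_zero_of_lt_one hQ0.le hQ1).const_mul (Q ^ a)
  have hlim : (0 - 1) / (Q - 1) = (1 - Q)⁻¹ := by
    rw [inv_eq_one_div, div_eq_div_iff (by linarith) (by linarith)]
    ring
  simpa only [qNum, hlim] using (hpow.sub_const 1).div_const (Q - 1)

theorem qFact_succ (n : ℕ) : qFact Q (n + 1) = qFact Q n * qNum Q (n + 1) :=
  Finset.prod_range_succ _ _

theorem qFact_pos (hQ0 : 0 < Q) (hQ1 : Q < 1) (n : ℕ) : 0 < qFact Q n :=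
  Finset.prod_pos fun _ _ => qNum_pos hQ0 hQ1 (by positivity)

end QNumbers

/-- The infinite q-Pochhammer symbol `(Q^t; Q)_∞`. -/
def qPochInf (Q t : ℝ) : ℝ := ∏' k : ℕ, (1 - Q ^ ((k : ℝ) + t))

section QGamma

variable {Q t : ℝ}

theorem summable_rpow_natCast_add (hQ0 : 0 < Q) (hQ1 : Q < 1) (t : ℝ) :
    Summable fun k : ℕ => Q ^ ((k : ℝ) + t) := by
  simpa only [rpow_natCast_add hQ0] using
    (summable_geometric_of_lt_one hQ0.le hQ1).mul_left (Q ^ t)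

theorem hasProd_one_sub_rpow (hQ0 : 0 < Q) (hQ1 : Q < 1) (ht : 0 < t) :
    HasProd (fun k : ℕ => 1 - Q ^ ((k : ℝ) + t))
      (exp (∑' k : ℕ, log (1 - Q ^ ((k : ℝ) + t)))) := by
  refine hasProd_of_hasSum_log (fun k => one_sub_rpow_pos hQ0 hQ1 (by positivity)) ?_
  simpa only [sub_eq_add_neg] using
    (summable_log_one_add_of_summable (summable_rpow_natCast_add hQ0 hQ1 t).neg).hasSum

theorem hasProd_qPochInf (hQ0 : 0 < Q) (hQ1 : Q < 1) (ht : 0 < t) :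
    HasProd (fun k : ℕ => 1 - Q ^ ((k : ℝ) + t)) (qPochInf Q t) :=
  (hasProd_one_sub_rpow hQ0 hQ1 ht).multipliable.hasProd

theorem qPochInf_pos (hQ0 : 0 < Q) (hQ1 : Q < 1) (ht : 0 < t) : 0 < qPochInf Q t := by
  rw [qPochInf, (hasProd_one_sub_rpow hQ0 hQ1 ht).tprod_eq]
  exact exp_pos _

theorem qPochInf_eq_one_sub_rpow_mul (hQ0 : 0 < Q) (hQ1 : Q < 1) (ht : 0 < t) :
    qPochInf Q t = (1 - Q ^ t) * qPochInf Q (t + 1) := by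
  have hshift : ∀ k : ℕ, (((k + 1 : ℕ) : ℝ) + t) = (k : ℝ) + (t + 1) := fun k => by
    push_cast; ring
  have hmult : Multipliable fun k : ℕ => 1 - Q ^ (((k + 1 : ℕ) : ℝ) + t) := by
    simpa only [hshift] using (hasProd_qPochInf hQ0 hQ1 (by linarith : 0 < t + 1)).multipliable
  rw [qPochInf, tprod_eq_zero_mul' (f := fun k : ℕ => 1 - Q ^ ((k : ℝ) + t)) hmult]
  simp only [hshift, Nat.cast_zero, zero_add, qPochInf]

theorem qGamma_eq_qPochInf_div (hQ0 : 0 < Q) (hQ1 : Q < 1) (ht : 0 < t) :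
    qGamma Q t = (1 - Q) ^ (1 - t) * (qPochInf Q 1 / qPochInf Q t) := by
  have hnum : HasProd (fun k : ℕ => 1 - Q ^ (k + 1)) (qPochInf Q 1) := by
    simpa only [← Nat.cast_add_one, rpow_natCast] using hasProd_qPochInf hQ0 hQ1 one_pos
  rw [qGamma, (hnum.div₀ (hasProd_qPochInf hQ0 hQ1 ht) (qPochInf_pos hQ0 hQ1 ht).ne').tprod_eq]

theorem qGamma_pos (hQ0 : 0 < Q) (hQ1 : Q < 1) (ht : 0 < t) : 0 < qGamma Q t := by
  have := qPochInf_pos hQ0 hQ1 one_pos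
  have := qPochInf_pos hQ0 hQ1 ht
  have : 0 < 1 - Q := by linarith
  rw [qGamma_eq_qPochInf_div hQ0 hQ1 ht]
  positivity

theorem qGamma_add_one (hQ0 : 0 < Q) (hQ1 : Q < 1) (ht : 0 < t) :
    qGamma Q (t + 1) = qNum Q t * qGamma Q t := by
  have h1Q : 1 - Q ≠ 0 := by linarith
  have hQ1' : Q - 1 ≠ 0 := by linarith
  have hP := qPochInf_pos hQ0 hQ1 (by linarith : 0 < t + 1)
  have hQt := one_sub_rpow_pos hQ0 hQ1 ht
  rw [qGamma_eq_qPochInf_div hQ0 hQ1 ht, qGamma_eq_qPochInf_div hQ0 hQ1 (by linarith),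
    qPochInf_eq_one_sub_rpow_mul hQ0 hQ1 ht, show 1 - t = 1 - (t + 1) + 1 by ring,
    rpow_add_one h1Q, qNum]
  field_simp
  ring

end QGamma

def qBesselCoeff (Q μ : ℝ) (i : ℕ) : ℝ := (-1) ^ i / (qFact Q i * qGamma Q ((i : ℝ) + μ + 1))

def qBesselSeries (Q μ x : ℝ) : ℝ := ∑' i : ℕ, qBesselCoeff Q μ i * x ^ (2 * i)

theorem qBessel1_eq (q μ x : ℝ) :
    qBessel1 q μ x = (x / (1 + q)) ^ μ * qBesselSeries (q ^ 2) μ (x / (1 + q)) :=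
  rfl

section Coefficients

variable {Q μ : ℝ}

theorem qBesselCoeff_succ (i : ℕ) :
    qBesselCoeff Q μ (i + 1) = -qBesselCoeff Q (μ + 1) i / qNum Q (i + 1) := by
  rw [qBesselCoeff, qBesselCoeff, qFact_succ, pow_succ, Nat.cast_succ,
    show (i : ℝ) + 1 + μ + 1 = i + (μ + 1) + 1 by ring]
  ring

theorem qBesselCoeff_add_one (hQ0 : 0 < Q) (hQ1 : Q < 1) {i : ℕ} (hi : 0 < i + μ + 1) :
    qBesselCoeff Q (μ + 1) i = qBesselCoeff Q μ i / qNum Q (i + μ + 1) := by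
  rw [qBesselCoeff, qBesselCoeff, ← add_assoc, qGamma_add_one hQ0 hQ1 hi]
  ring

theorem qBesselCoeff_succ_eq_div (hQ0 : 0 < Q) (hQ1 : Q < 1) {i : ℕ} (hi : 0 < i + μ + 1) :
    qBesselCoeff Q μ (i + 1) = -qBesselCoeff Q μ i / (qNum Q (i + 1) * qNum Q (i + μ + 1)) := by
  rw [qBesselCoeff_succ, qBesselCoeff_add_one hQ0 hQ1 hi]
  ring

theorem qBesselCoeff_ne_zero (hQ0 : 0 < Q) (hQ1 : Q < 1) (hμ : -1 < μ) (i : ℕ) :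
    qBesselCoeff Q μ i ≠ 0 := by
  have := qFact_pos hQ0 hQ1 i
  have := qGamma_pos hQ0 hQ1 (by linarith [(i.cast_nonneg : (0 : ℝ) ≤ i)] : 0 < (i : ℝ) + μ + 1)
  rw [qBesselCoeff]
  positivity

theorem summable_qBesselCoeff_mul_pow (hQ0 : 0 < Q) (hQ1 : Q < 1) (hμ : -1 < μ) {x : ℝ}
    (hx : 0 < x) (hxQ : (1 - Q) * x < 1) :
    Summable fun i : ℕ => qBesselCoeff Q μ i * x ^ (2 * i) := by
  have hi : ∀ i : ℕ, 0 < (i : ℝ) + μ + 1 := fun i => by linarith [(i.cast_nonneg : (0 : ℝ) ≤ i)]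
  have hratio : ∀ i : ℕ,
      ‖qBesselCoeff Q μ (i + 1) * x ^ (2 * (i + 1))‖ / ‖qBesselCoeff Q μ i * x ^ (2 * i)‖ =
        x ^ 2 / (qNum Q (i + 1) * qNum Q (i + μ + 1)) := fun i => by
    have := qNum_pos hQ0 hQ1 (by positivity : (0 : ℝ) < i + 1)
    have := qNum_pos hQ0 hQ1 (hi i)
    have := qBesselCoeff_ne_zero hQ0 hQ1 hμ i
    rw [qBesselCoeff_succ_eq_div hQ0 hQ1 (hi i), mul_add, pow_add, norm_mul, norm_mul, norm_mul,
      norm_div, norm_neg, norm_mul, Real.norm_of_nonneg (by positivity : 0 ≤ qNum Q (i + 1)),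
      Real.norm_of_nonneg (by positivity : 0 ≤ qNum Q (i + μ + 1))]
    simp only [norm_pow, Real.norm_of_nonneg hx.le]
    field_simp
  have hlim : Tendsto (fun i : ℕ => x ^ 2 / (qNum Q (i + 1) * qNum Q (i + μ + 1))) atTop
      (𝓝 (((1 - Q) * x) ^ 2)) := by
    have h1Q : (1 - Q)⁻¹ ≠ 0 := inv_ne_zero (by linarith)
    have := (tendsto_const_nhds (x := x ^ 2)).div ((tendsto_qNum_natCast_add hQ0 hQ1 1).mul
      (tendsto_qNum_natCast_add hQ0 hQ1 (μ + 1))) (mul_ne_zero h1Q h1Q)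
    rw [show ((1 - Q) * x) ^ 2 = x ^ 2 / ((1 - Q)⁻¹ * (1 - Q)⁻¹) by field_simp]
    simpa only [add_assoc, Pi.div_def] using this
  refine summable_of_ratio_test_tendsto_lt_one (pow_lt_one₀ (by nlinarith) hxQ two_ne_zero)
    (Eventually.of_forall fun i => mul_ne_zero (qBesselCoeff_ne_zero hQ0 hQ1 hμ i)
      (by positivity)) ?_
  simpa only [hratio] using hlim

theorem qNum_mul_qBesselCoeff_zero (hQ0 : 0 < Q) (hQ1 : Q < 1) {ν : ℝ} (hν : 0 < ν) :
    qNum Q ν * qBesselCoeff Q ν 0 = qBesselCoeff Q (ν - 1) 0 := by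
  have h := qBesselCoeff_add_one hQ0 hQ1 (μ := ν - 1) (i := 0) (by simpa using hν)
  rw [sub_add_cancel, Nat.cast_zero, zero_add, sub_add_cancel] at h
  rw [h, mul_div_cancel₀ _ (qNum_pos hQ0 hQ1 hν).ne']

theorem qNum_mul_qBesselCoeff_succ_sub (hQ0 : 0 < Q) (hQ1 : Q < 1) {ν : ℝ} (hν : 0 < ν)
    (i : ℕ) :
    qNum Q ν * Q ^ (i + 1) * qBesselCoeff Q ν (i + 1) - qBesselCoeff Q (ν - 1) (i + 1) =
      qBesselCoeff Q (ν + 1) i := by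
  have hadd : qNum Q (i + ν + 1) = qNum Q (i + 1) + Q ^ (i + 1) * qNum Q ν := by
    rw [show (i : ℝ) + ν + 1 = i + 1 + ν by ring, qNum_add hQ0, ← Nat.cast_succ, rpow_natCast]
  have hcoeff : qBesselCoeff Q ν i = qNum Q (i + ν + 1) * qBesselCoeff Q (ν + 1) i := by
    rw [qBesselCoeff_add_one hQ0 hQ1 (by positivity),
      mul_div_cancel₀ _ (qNum_pos hQ0 hQ1 (by positivity)).ne']
  have := (qNum_pos hQ0 hQ1 (by positivity : (0 : ℝ) < i + 1)).ne'
  rw [qBesselCoeff_succ, qBesselCoeff_succ, sub_add_cancel, hcoeff, hadd]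
  field_simp
  ring

end Coefficients

theorem qBesselSeries_recurrence {q ν x : ℝ} (hq0 : 0 < q) (hq1 : q < 1) (hν : 0 < ν)
    (hx : 0 < x) (hxq : (1 - q ^ 2) * x < 1) :
    x ^ 2 * qBesselSeries (q ^ 2) (ν + 1) x + qBesselSeries (q ^ 2) (ν - 1) x =
      qNum (q ^ 2) ν * qBesselSeries (q ^ 2) ν (q * x) := by
  have hQ0 : 0 < q ^ 2 := by positivity
  have hQ1 : q ^ 2 < 1 := by nlinarith
  have hqx : (1 - q ^ 2) * (q * x) < 1 := by nlinarith
  set f : ℕ → ℝ := fun i => qNum (q ^ 2) ν * (qBesselCoeff (q ^ 2) ν i * (q * x) ^ (2 * i)) -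
    qBesselCoeff (q ^ 2) (ν - 1) i * x ^ (2 * i) with hf
  have hsum_qx :=
    (summable_qBesselCoeff_mul_pow hQ0 hQ1 (by linarith : -1 < ν) (by positivity) hqx).mul_left
      (qNum (q ^ 2) ν)
  have hsum_x := summable_qBesselCoeff_mul_pow hQ0 hQ1 (by linarith : -1 < ν - 1) hx hxq
  have hf0 : f 0 = 0 := by
    simp only [hf, mul_zero, pow_zero, mul_one, qNum_mul_qBesselCoeff_zero hQ0 hQ1 hν, sub_self]
  have hf_succ : ∀ i, f (i + 1) = x ^ 2 * (qBesselCoeff (q ^ 2) (ν + 1) i * x ^ (2 * i)) := by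
    intro i
    rw [hf, ← qNum_mul_qBesselCoeff_succ_sub hQ0 hQ1 hν i]
    ring
  have htsum : ∑' i, f i =
      qNum (q ^ 2) ν * qBesselSeries (q ^ 2) ν (q * x) - qBesselSeries (q ^ 2) (ν - 1) x := by
    rw [qBesselSeries, qBesselSeries, ← tsum_mul_left]
    exact (hsum_qx.hasSum.sub hsum_x.hasSum).tsum_eq
  have hsum : Summable f := hsum_qx.sub hsum_x
  rw [← eq_sub_iff_add_eq, ← htsum, hsum.tsum_eq_zero_add, hf0, zero_add,
    tsum_congr hf_succ, tsum_mul_left, qBesselSeries]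

end QBessel

open QBessel

/-- recurrence for the first q-Bessel function:
`u^{-(ν-1)} (J^{(1)}_{ν+1}(u|q²) + J^{(1)}_{ν-1}(u|q²)) = [2ν]_q (qu)^{-ν} J^{(1)}_ν(qu|q²)`
for `ν > 0` and `0 < u < 1/(1-q)`. -/
theorem qBessel1_recurrence (q : ℝ) (hq0 : 0 < q) (hq1 : q < 1)
    (ν : ℝ) (hν : ν > 0) (u : ℝ) (hu0 : 0 < u) (hu1 : u < 1 / (1 - q)) :
    u ^ (-(ν - 1)) * (qBessel1 q (ν + 1) u + qBessel1 q (ν - 1) u) =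
      qNum q (2 * ν) * ((q * u) ^ (-ν) * qBessel1 q ν (q * u)) := by
  have h1q : 0 < 1 + q := by linarith
  set x := u / (1 + q) with hx_def
  have hx : 0 < x := by positivity
  have hxq : (1 - q ^ 2) * x < 1 := by
    rw [hx_def, show (1 - q ^ 2) * (u / (1 + q)) = u * (1 - q) by field_simp; ring]
    rwa [lt_div_iff₀ (by linarith)] at hu1
  have hx_pow : x ^ (ν + 1) = x ^ (ν - 1) * x ^ 2 := by
    rw [show ν + 1 = ν - 1 + 2 by ring, Real.rpow_add hx, Real.rpow_two]
  rw [qBessel1_eq, qBessel1_eq, qBessel1_eq, mul_div_assoc, ← hx_def, hx_pow,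
    qNum_two_mul hq0.le hq1.ne]
  calc u ^ (-(ν - 1)) * (x ^ (ν - 1) * x ^ 2 * qBesselSeries (q ^ 2) (ν + 1) x +
        x ^ (ν - 1) * qBesselSeries (q ^ 2) (ν - 1) x)
      = u ^ (-(ν - 1)) * x ^ (ν - 1) *
          (x ^ 2 * qBesselSeries (q ^ 2) (ν + 1) x + qBesselSeries (q ^ 2) (ν - 1) x) := by ring
    _ = (1 + q) ^ (-ν) * (1 + q) * (qNum (q ^ 2) ν * qBesselSeries (q ^ 2) ν (q * x)) := by
      rw [rpow_neg_mul_div_rpow hu0 h1q.le, qBesselSeries_recurrence hq0 hq1 hν hx hxq,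
        neg_sub', sub_neg_eq_add, Real.rpow_add_one h1q.ne']
    _ = (1 + q) * qNum (q ^ 2) ν *
          ((q * u) ^ (-ν) * ((q * x) ^ ν * qBesselSeries (q ^ 2) ν (q * x))) := by
      rw [hx_def, ← mul_div_assoc, ← mul_assoc ((q * u) ^ (-ν)),
        rpow_neg_mul_div_rpow (by positivity) h1q.le]
      ring
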